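/- Let d ≥ 1 and s > 0, and define u₊ : (Fin d → ℝ) × (Fin d → ℝ) × ℝ → ℂ by u₊(x, y, t) := exp(2πi t)·exp(-πs·∑_j x_j²)·∏_{j=1}^d θ(y_j + i·s·x_j, i·s), where θ is Jacobi's theta function (jacobiTheta₂). Then u₊ is invariant under the left action of the integer lattice of the Heisenberg group: for all a, b ∈ ℤ^d and c ∈ ℤ, u₊(x + a, y + b, t + c + a·y) = u₊(x, y, t) for every (x, y, t), where a·y = ∑_j a_j y_j. Consequently u₊ descends to a well-defined function on the compact Heisenberg manifold Γ\ℍ_d. -/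

import Mathlib

/-!
In each coordinate, `e^{-πs x²} θ(y + isx, is)` is invariant under `y ↦ y + b` and, by the
quasi-periodicity of `θ` in `z` with period `τ = is`, picks up exactly the phase `e^{-2πiay}`
under `(x, y) ↦ (x + a, y + b)`: the Gaussian absorbs the real part of the theta multiplier.
The product of these phases is `e^{-2πi a·y}`, which the factor `e^{2πit}` cancels when
`t ↦ t + c + a·y`.
-/

open Complex Real

/-- The null-eigenvector `u₊` of the Yamabe operator on the compact Heisenberg
manifold: `u₊(x,y,t) = e^{2πit} e^{-πs|x|²} ∏_j θ(y_j + i s x_j, i s)`. -/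
noncomputable def uPlus (d : ℕ) (s : ℝ) (x y : Fin d → ℝ) (t : ℝ) : ℂ :=
  Complex.exp (2 * Real.pi * Complex.I * t)
    * Complex.exp (-(Real.pi * s) * ∑ j, ((x j : ℂ)) ^ 2)
    * ∏ j, jacobiTheta₂ ((y j : ℂ) + Complex.I * s * (x j : ℂ)) (Complex.I * s)

lemma jacobiTheta₂_add_int_add_int_mul (z τ : ℂ) (m n : ℤ) :
    jacobiTheta₂ (z + m + n * τ) τ
      = cexp (-π * I * (n ^ 2 * τ + 2 * n * z)) * jacobiTheta₂ z τ := by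
  conv_rhs => rw [jacobiTheta₂, ← tsum_mul_left, ← (Equiv.addRight n).tsum_eq]
  refine tsum_congr fun k ↦ ?_
  simp_rw [jacobiTheta₂_term, ← Complex.exp_add, Equiv.coe_addRight, Int.cast_add]
  rw [show 2 * π * I * k * (z + m + n * τ) + π * I * k ^ 2 * τ
      = (-π * I * (n ^ 2 * τ + 2 * n * z) + (2 * π * I * (k + n) * z + π * I * (k + n) ^ 2 * τ))
        + (k * m : ℤ) * (2 * π * I) by push_cast; ring]
  rw [Complex.exp_add, Complex.exp_int_mul_two_pi_mul_I, mul_one]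

noncomputable def gaussianTheta (s x y : ℝ) : ℂ :=
  cexp (-(π * s) * (x : ℂ) ^ 2) * jacobiTheta₂ ((y : ℂ) + I * s * x) (I * s)

lemma gaussianTheta_add_int (s x y : ℝ) (a b : ℤ) :
    gaussianTheta s (x + a) (y + b) = cexp (-(2 * π * I * (a * y))) * gaussianTheta s x y := by
  have hθ : jacobiTheta₂ (((y + b : ℝ) : ℂ) + I * s * ((x + a : ℝ) : ℂ)) (I * s)
      = cexp (-π * I * ((a : ℂ) ^ 2 * (I * s) + 2 * a * (y + I * s * x)))
        * jacobiTheta₂ ((y : ℂ) + I * s * x) (I * s) := by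
    rw [← jacobiTheta₂_add_int_add_int_mul]
    congr 1
    push_cast
    ring
  simp only [gaussianTheta, hθ, ← mul_assoc, ← Complex.exp_add]
  congr 2
  push_cast
  linear_combination (-(π : ℂ) * s * (a ^ 2 + 2 * a * x)) * I_mul_I

lemma uPlus_eq_exp_mul_prod_gaussianTheta (d : ℕ) (s : ℝ) (x y : Fin d → ℝ) (t : ℝ) :
    uPlus d s x y t = cexp (2 * π * I * t) * ∏ j, gaussianTheta s (x j) (y j) := by
  simp only [uPlus, gaussianTheta, Finset.prod_mul_distrib, ← Complex.exp_sum, Finset.mul_sum,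
    mul_assoc]

theorem uPlus_lattice_invariant (d : ℕ) (s : ℝ)
    (a b : Fin d → ℤ) (c : ℤ) (x y : Fin d → ℝ) (t : ℝ) :
    uPlus d s (fun j => x j + (a j : ℝ)) (fun j => y j + (b j : ℝ))
        (t + (c : ℝ) + ∑ j, (a j : ℝ) * y j)
      = uPlus d s x y t := by
  simp only [uPlus_eq_exp_mul_prod_gaussianTheta, gaussianTheta_add_int, Finset.prod_mul_distrib,
    ← Complex.exp_sum, Finset.sum_neg_distrib, ← Finset.mul_sum]
  rw [← mul_assoc, ← Complex.exp_add]
  congr 1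
  exact Complex.exp_eq_exp_iff_exists_int.mpr ⟨c, by push_cast; ring⟩
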